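/- Let G = (Q, q_in, q_out, T) be a strongly connected VASS of dimension d, let i be a component not fixed by G, and let B ∈ ℕ with x(i) < B. Let G' be the (i,B,r)-unfolding of G for any r ∈ ℕ_B = {0,…,B−1,ω}. Then rank(G') <_lex rank(G), where the rank of a VASS is the tuple (r_d,…,r_0) ∈ ℕ^{d+1} counting for each dimension j the number of transitions t with dim VS(t) = j, ordered lexicographically with most significant coordinate r_d. -/

import Mathlib

/-- A transition of a VASS of dimension `d` with states in `Q`. -/
abbrev VTrans (Q : Type) (d : ℕ) := Q × (Fin d → ℤ) × Q

/-- `IsPath T p q l` : `l` is a path in the VASS with transition set `T`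
from state `p` to state `q`. -/
inductive IsPath {Q : Type} {d : ℕ} (T : Set (VTrans Q d)) : Q → Q → List (VTrans Q d) → Prop
  | nil (q : Q) : IsPath T q q []
  | cons {p q r : Q} {a : Fin d → ℤ} {l : List (VTrans Q d)} :
      (p, a, q) ∈ T → IsPath T q r l → IsPath T p r ((p, a, q) :: l)

/-- Displacement of a path in `ℚ^d`. -/
def dispQ {Q : Type} {d : ℕ} (l : List (VTrans Q d)) : Fin d → ℚ :=
  fun i => (((l.map (fun t : VTrans Q d => t.2.1)).sum) i : ℚ)

/-- `VS T t`: the `ℚ`-vector space spanned by the displacements of the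
cycles containing the transition `t`. -/
def VS {Q : Type} {d : ℕ} (T : Set (VTrans Q d)) (t : VTrans Q d) :
    Submodule ℚ (Fin d → ℚ) :=
  Submodule.span ℚ {v | ∃ q l, IsPath T q q l ∧ t ∈ l ∧ v = dispQ l}

/-- The rank of a VASS: the tuple `(r_d, …, r_0)` where `r_j` is the number of
transitions `t` with `dim VS(t) = j`; index `j` of the tuple corresponds to
dimension `j`, the most significant coordinate being `r_d`. -/
noncomputable def rankVASS {Q : Type} {d : ℕ} (T : Set (VTrans Q d)) :
    Fin (d + 1) → ℕ :=
  fun j => Set.ncard {t | t ∈ T ∧ Module.finrank ℚ ↥(VS T t) = (j : ℕ)}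

/-- Strict lexicographic order with most significant coordinate at the
largest index. -/
def LexLt {d : ℕ} (r s : Fin (d + 1) → ℕ) : Prop :=
  ∃ i, r i < s i ∧ ∀ j, i < j → r j = s j

/-- The transitions of the `(i,B,·)`-unfolding of a VASS with transitions `T`
and input state `qin`: states are pairs `(q, m)` with `m ∈ ℕ_B = {0,…,B−1,ω}`
(`ω` encoded as `⊤ : ℕ∞`), and a transition `((p,m),a,(q,n))` exists whenever
`(p,a,q) ∈ T` and either `m, n < B` with `n = m + a(i)`, or `m < B`, `n = ω`
and `m + a(i) ≥ B`, or `m = n = ω`; moreover `m = ω` requires `q ≠ qin`. -/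
def Unfold {Q : Type} {d : ℕ} (T : Set (VTrans Q d)) (qin : Q) (i : Fin d)
    (B : ℕ) : Set (VTrans (Q × ℕ∞) d) :=
  { tr | ∃ (p q : Q) (a : Fin d → ℤ) (m n : ℕ∞),
      tr = ((p, m), a, (q, n)) ∧ (p, a, q) ∈ T ∧
      ((∃ mv nv : ℕ, mv < B ∧ nv < B ∧ m = (mv : ℕ∞) ∧ n = (nv : ℕ∞) ∧
          (nv : ℤ) = (mv : ℤ) + a i)
        ∨ (∃ mv : ℕ, mv < B ∧ m = (mv : ℕ∞) ∧ n = ⊤ ∧ (B : ℤ) ≤ (mv : ℤ) + a i)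
        ∨ (m = ⊤ ∧ n = ⊤ ∧ q ≠ qin)) }

/-!
Every cycle of the unfolding projects to a cycle of `G` with the same displacement, so each
`VS(t')` of the unfolding lies in the cycle space `V` of `G`, which is `VS(t)` for every
transition `t` of `G` by strong connectivity. Along a path of the unfolding the finite
counter values telescope, so a cycle through a transition with finite counter has zero
`i`-th component, and its `VS` lies in `V ∩ {v | v i = 0}`, a proper subspace because `i` is
not fixed. Hence only the `ω`-transitions can reach `dim V`, and these are copies of the
transitions of `G` not entering `q_in`, of which there are fewer than `|T|`.
-/

section Paths

variable {Q : Type} {d : ℕ} {T : Set (VTrans Q d)}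

theorem IsPath.append {p q r : Q} {l₁ l₂ : List (VTrans Q d)}
    (h₁ : IsPath T p q l₁) (h₂ : IsPath T q r l₂) : IsPath T p r (l₁ ++ l₂) := by
  induction h₁ with
  | nil => simpa
  | cons ht _ ih => exact .cons ht (ih h₂)

theorem IsPath.eq_or_exists_mem_into {p q : Q} {l : List (VTrans Q d)} (h : IsPath T p q l) :
    p = q ∨ ∃ t ∈ T, t.2.2 = q := by
  induction h with
  | nil => exact .inl rfl
  | cons ht _ ih => exact ih.elim (fun h => .inr ⟨_, ht, h⟩) .inr

theorem exists_mem_into_of_stronglyConnected (hsc : ∀ p q : Q, ∃ l, IsPath T p q l)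
    {t : VTrans Q d} (ht : t ∈ T) (q : Q) : ∃ t' ∈ T, t'.2.2 = q := by
  obtain ⟨l, hl⟩ := hsc t.2.2 q
  exact hl.eq_or_exists_mem_into.elim (fun h => ⟨t, ht, h⟩) id

end Paths

section Displacement

variable {Q : Type} {d : ℕ}

def disp (l : List (VTrans Q d)) : Fin d → ℤ :=
  (l.map fun t => t.2.1).sum

theorem dispQ_apply (l : List (VTrans Q d)) (j : Fin d) : dispQ l j = disp l j := rfl

@[simp]
theorem disp_nil : disp ([] : List (VTrans Q d)) = 0 := rfl

@[simp]
theorem disp_cons (t : VTrans Q d) (l : List (VTrans Q d)) : disp (t :: l) = t.2.1 + disp l := by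
  simp [disp]

@[simp]
theorem disp_append (l₁ l₂ : List (VTrans Q d)) : disp (l₁ ++ l₂) = disp l₁ + disp l₂ := by
  simp [disp]

theorem dispQ_cons (t : VTrans Q d) (l : List (VTrans Q d)) :
    dispQ (t :: l) = (fun j => (t.2.1 j : ℚ)) + dispQ l := by
  funext j
  simp [dispQ_apply]

theorem dispQ_append (l₁ l₂ : List (VTrans Q d)) : dispQ (l₁ ++ l₂) = dispQ l₁ + dispQ l₂ := by
  funext j
  simp [dispQ_apply]

/-- If no cycle moves component `i`, the `i`-th displacement of any path from a base point is a
potential fixing `i`. -/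
theorem exists_cycle_disp_ne_zero {T : Set (VTrans Q d)} (q₀ : Q)
    (hsc : ∀ p q : Q, ∃ l, IsPath T p q l) (i : Fin d)
    (hnotfixed : ¬ ∃ f : Q → ℤ, ∀ p a q, (p, a, q) ∈ T → f q = f p + a i) :
    ∃ q l, IsPath T q q l ∧ disp l i ≠ 0 := by
  by_contra! hcyc
  choose path hpath using hsc
  refine hnotfixed ⟨fun q => disp (path q₀ q) i, fun p a q ht => ?_⟩
  have hq := hcyc q₀ _ ((hpath q₀ q).append (hpath q q₀))
  have hp := hcyc q₀ _ (((hpath q₀ p).append (.cons ht (hpath q q₀))))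
  simp only [disp_append, disp_cons, Pi.add_apply] at hq hp
  dsimp only
  omega

end Displacement

section CycleSpace

variable {Q : Type} {d : ℕ}

def cycleSpan (T : Set (VTrans Q d)) : Submodule ℚ (Fin d → ℚ) :=
  Submodule.span ℚ {v | ∃ q l, IsPath T q q l ∧ v = dispQ l}

theorem VS_le_cycleSpan (T : Set (VTrans Q d)) (t : VTrans Q d) : VS T t ≤ cycleSpan T :=
  Submodule.span_mono fun _ ⟨q, l, hl, _, hv⟩ => ⟨q, l, hl, hv⟩

/-- A cycle `c` at any state is the difference of two cycles through `t`: one going around `t`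
and back, and one making the detour through `c`. -/
theorem VS_eq_cycleSpan {T : Set (VTrans Q d)} (hsc : ∀ p q : Q, ∃ l, IsPath T p q l)
    {t : VTrans Q d} (ht : t ∈ T) : VS T t = cycleSpan T := by
  refine le_antisymm (VS_le_cycleSpan T t) ?_
  rw [cycleSpan, Submodule.span_le]
  rintro _ ⟨s, c, hc, rfl⟩
  obtain ⟨p, a, q⟩ := t
  obtain ⟨l₁, hl₁⟩ := hsc q s
  obtain ⟨l₂, hl₂⟩ := hsc s p
  have mem_VS : ∀ l, IsPath T q p l → dispQ ((p, a, q) :: l) ∈ VS T (p, a, q) := fun l hl =>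
    Submodule.subset_span ⟨p, _, .cons ht hl, List.mem_cons_self, rfl⟩
  have hdiff : dispQ c = dispQ ((p, a, q) :: (l₁ ++ (c ++ l₂)))
      - dispQ ((p, a, q) :: (l₁ ++ l₂)) := by
    simp only [dispQ_cons, dispQ_append]
    abel
  rw [SetLike.mem_coe, hdiff]
  exact sub_mem (mem_VS _ (hl₁.append (hc.append hl₂))) (mem_VS _ (hl₁.append hl₂))

theorem finrank_inf_ker_lt_finrank_cycleSpan {T : Set (VTrans Q d)} {q : Q}
    {l : List (VTrans Q d)} (hl : IsPath T q q l) {i : Fin d} (hi : disp l i ≠ 0) :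
    Module.finrank ℚ ↥(cycleSpan T ⊓ LinearMap.ker (LinearMap.proj i)) <
      Module.finrank ℚ (cycleSpan T) := by
  refine Submodule.finrank_lt_finrank_of_lt <| inf_lt_left.2 fun hle => hi ?_
  have h0 : dispQ l i = 0 := hle (Submodule.subset_span ⟨q, l, hl, rfl⟩)
  rw [dispQ_apply] at h0
  exact_mod_cast h0

def mapStates {Q' : Type} (f : Q' → Q) (t : VTrans Q' d) : VTrans Q d :=
  (f t.1, t.2.1, f t.2.2)

variable {Q' : Type} {U : Set (VTrans Q' d)} {T : Set (VTrans Q d)} {f : Q' → Q}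

theorem IsPath.map (hf : ∀ p a q, (p, a, q) ∈ U → (f p, a, f q) ∈ T) {p q : Q'}
    {l : List (VTrans Q' d)} (h : IsPath U p q l) : IsPath T (f p) (f q) (l.map (mapStates f)) := by
  induction h with
  | nil => exact .nil _
  | cons ht _ ih => exact .cons (hf _ _ _ ht) ih

theorem dispQ_map_mapStates (l : List (VTrans Q' d)) : dispQ (l.map (mapStates f)) = dispQ l := by
  funext j
  simp [dispQ, Function.comp_def, mapStates]

theorem VS_le_cycleSpan_of_map (hf : ∀ p a q, (p, a, q) ∈ U → (f p, a, f q) ∈ T)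
    (t : VTrans Q' d) : VS U t ≤ cycleSpan T := by
  rw [VS, Submodule.span_le]
  rintro _ ⟨s, l, hl, -, rfl⟩
  exact Submodule.subset_span ⟨f s, _, hl.map hf, (dispQ_map_mapStates l).symm⟩

end CycleSpace

section Unfolding

variable {Q : Type} {d : ℕ} {T : Set (VTrans Q d)} {qin : Q} {i : Fin d} {B : ℕ}

theorem mem_unfold_spec {p q : Q × ℕ∞} {a : Fin d → ℤ} (h : (p, a, q) ∈ Unfold T qin i B) :
    (p.1, a, q.1) ∈ T ∧ (p.2 = ⊤ → q.2 = ⊤) ∧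
      ∀ n : ℕ, q.2 = n → ∃ m : ℕ, p.2 = m ∧ (n : ℤ) = m + a i := by
  obtain ⟨p, q, a, m, n, heq, hT, hcase⟩ := h
  simp only [Prod.mk.injEq] at heq
  obtain ⟨rfl, rfl, rfl⟩ := heq
  refine ⟨hT, ?_, fun n' hn' => ?_⟩ <;> dsimp only at *
  · rcases hcase with ⟨mv, nv, -, -, rfl, rfl, -⟩ | ⟨mv, -, rfl, rfl, -⟩ | ⟨rfl, rfl, -⟩ <;> simp
  · rcases hcase with ⟨mv, nv, -, -, rfl, rfl, hrel⟩ | ⟨mv, -, rfl, rfl, -⟩ | ⟨rfl, rfl, -⟩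
    · obtain rfl : nv = n' := by exact_mod_cast hn'
      exact ⟨mv, rfl, hrel⟩
    all_goals simp at hn'

theorem IsPath.unfold_fst_eq_top {s s' : Q × ℕ∞} {l : List (VTrans (Q × ℕ∞) d)}
    (h : IsPath (Unfold T qin i B) s s' l) (hs : s.2 = ⊤) : ∀ t ∈ l, t.1.2 = ⊤ := by
  induction h with
  | nil => simp
  | cons ht _ ih =>
    intro t htl
    rcases List.mem_cons.1 htl with rfl | htl
    · exact hs
    · exact ih ((mem_unfold_spec ht).2.1 hs) t htl

theorem IsPath.unfold_disp_eq_sub {s s' : Q × ℕ∞} {l : List (VTrans (Q × ℕ∞) d)}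
    (h : IsPath (Unfold T qin i B) s s' l) (n : ℕ) (hn : s'.2 = n) :
    ∃ m : ℕ, s.2 = m ∧ disp l i = n - m := by
  induction h with
  | nil => exact ⟨n, hn, by simp⟩
  | cons ht _ ih =>
    obtain ⟨m, hm, hl⟩ := ih hn
    obtain ⟨m', hm', hstep⟩ := (mem_unfold_spec ht).2.2 m hm
    refine ⟨m', hm', ?_⟩
    simp only [disp_cons, Pi.add_apply, hl]
    omega

theorem IsPath.unfold_disp_eq_zero {s : Q × ℕ∞} {l : List (VTrans (Q × ℕ∞) d)}
    (h : IsPath (Unfold T qin i B) s s l) {t : VTrans (Q × ℕ∞) d} (ht : t ∈ l)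
    (hfin : t.1.2 ≠ ⊤) : disp l i = 0 := by
  obtain ⟨n, hn⟩ := ENat.ne_top_iff_exists.1 fun hs => hfin (h.unfold_fst_eq_top hs t ht)
  obtain ⟨m, hm, hl⟩ := h.unfold_disp_eq_sub n hn.symm
  obtain rfl : m = n := ENat.natCast_inj.1 (hm.symm.trans hn.symm)
  simpa using hl

theorem VS_unfold_le_ker {t : VTrans (Q × ℕ∞) d} (hfin : t.1.2 ≠ ⊤) :
    VS (Unfold T qin i B) t ≤ LinearMap.ker (LinearMap.proj i : (Fin d → ℚ) →ₗ[ℚ] ℚ) := by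
  rw [VS, Submodule.span_le]
  rintro _ ⟨s, l, hl, ht, rfl⟩
  simp [dispQ_apply, hl.unfold_disp_eq_zero ht hfin]

theorem ncard_lt_of_subset_unfold_top (hfin : T.Finite) (hin : ∃ t ∈ T, t.2.2 = qin)
    {S : Set (VTrans (Q × ℕ∞) d)} (hS : S ⊆ {t ∈ Unfold T qin i B | t.1.2 = ⊤}) :
    S.ncard < T.ncard := by
  set T' := {t ∈ T | t.2.2 ≠ qin}
  have hsub : S ⊆ (fun t : VTrans Q d => ((t.1, ⊤), t.2.1, (t.2.2, ⊤))) '' T' := by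
    intro t ht
    obtain ⟨⟨p, q, a, m, n, rfl, hT, hcase⟩, htop⟩ := hS ht
    rcases hcase with ⟨mv, nv, -, -, rfl, -⟩ | ⟨mv, -, rfl, -⟩ | ⟨-, rfl, hq⟩
    · simp at htop
    · simp at htop
    · exact ⟨(p, a, q), ⟨hT, hq⟩, by simpa using htop.symm⟩
  have hT' : T' ⊂ T :=
    let ⟨t, ht, htq⟩ := hin
    (Set.ssubset_iff_of_subset (Set.sep_subset _ _)).2 ⟨t, ht, fun h => h.2 htq⟩
  calc S.ncard ≤ _ := Set.ncard_le_ncard hsub ((hfin.subset (Set.sep_subset _ _)).image _)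
    _ ≤ T'.ncard := Set.ncard_image_le (hfin.subset (Set.sep_subset _ _))
    _ < T.ncard := Set.ncard_lt_ncard hT' hfin

end Unfolding

theorem lexLt_rankVASS {Q Q' : Type} {d : ℕ} {T : Set (VTrans Q d)} {U : Set (VTrans Q' d)}
    (k : Fin (d + 1)) (hT : ∀ t ∈ T, Module.finrank ℚ (VS T t) = k)
    (hU : ∀ t, Module.finrank ℚ (VS U t) ≤ k)
    (hlt : {t ∈ U | Module.finrank ℚ (VS U t) = k}.ncard < T.ncard) :
    LexLt (rankVASS U) (rankVASS T) := by
  refine ⟨k, ?_, fun j hj => ?_⟩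
  · exact hlt.trans_eq (congrArg Set.ncard (Set.ext fun t => ⟨fun ht => ⟨ht, hT t ht⟩, And.left⟩))
  · have hU0 : {t | t ∈ U ∧ Module.finrank ℚ (VS U t) = j} = ∅ :=
      Set.eq_empty_of_forall_notMem fun t ⟨_, h⟩ => by have := hU t; omega
    have hT0 : {t | t ∈ T ∧ Module.finrank ℚ (VS T t) = j} = ∅ :=
      Set.eq_empty_of_forall_notMem fun t ⟨ht, h⟩ => by rw [hT t ht] at h; omega
    simp only [rankVASS, hU0, hT0, Set.ncard_empty]

theorem stmt17_general {Q : Type} {d : ℕ} (T : Set (VTrans Q d)) (qin : Q)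
    (hfin : T.Finite)
    (hsc : ∀ p q : Q, ∃ l, IsPath T p q l)
    (i : Fin d)
    (hnotfixed : ¬ ∃ f : Q → ℤ, ∀ p a q, (p, a, q) ∈ T → f q = f p + a i)
    (B : ℕ) :
    LexLt (rankVASS (Unfold T qin i B)) (rankVASS T) := by
  obtain ⟨qc, lc, hlc, hi⟩ := exists_cycle_disp_ne_zero qin hsc i hnotfixed
  obtain ⟨t₀, ht₀⟩ : T.Nonempty := by
    cases hlc with
    | nil => simp at hi
    | cons ht _ => exact ⟨_, ht⟩
  have hmap : ∀ p a q, (p, a, q) ∈ Unfold T qin i B → (p.1, a, q.1) ∈ T :=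
    fun _ _ _ h => (mem_unfold_spec h).1
  set k := Module.finrank ℚ (cycleSpan T)
  have hk : k < d + 1 := Nat.lt_succ_of_le (by simpa using (cycleSpan T).finrank_le)
  have hU : ∀ t, Module.finrank ℚ (VS (Unfold T qin i B) t) ≤ k :=
    fun t => Submodule.finrank_mono (VS_le_cycleSpan_of_map hmap t)
  have htop : ∀ t, Module.finrank ℚ (VS (Unfold T qin i B) t) = k → t.1.2 = ⊤ := by
    intro t htk
    by_contra hω
    exact htk.not_lt <| (Submodule.finrank_mono <| le_inf (VS_le_cycleSpan_of_map hmap t)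
      (VS_unfold_le_ker hω)).trans_lt (finrank_inf_ker_lt_finrank_cycleSpan hlc hi)
  exact lexLt_rankVASS ⟨k, hk⟩ (fun t ht => by rw [VS_eq_cycleSpan hsc ht]) hU
    (ncard_lt_of_subset_unfold_top hfin (exists_mem_into_of_stronglyConnected hsc ht₀ qin)
      fun t ht => ⟨ht.1, htop t ht.2⟩)

/-- Rank decrease by unfolding: if `G` is a strongly connected VASS, `i` a
component not fixed by `G`, and `x(i) < B`, then the `(i,B,r)`-unfolding `G'`
of `G` satisfies `rank(G') <_lex rank(G)` (for any output counter value
`r ∈ ℕ_B`; the rank does not depend on the input and output states). -/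
theorem stmt17 {Q : Type} {d : ℕ} (T : Set (VTrans Q d)) (qin qout : Q)
    (hfin : T.Finite)
    (hsc : ∀ p q : Q, ∃ l, IsPath T p q l)
    (i : Fin d)
    (hnotfixed : ¬ ∃ f : Q → ℤ, ∀ p a q, (p, a, q) ∈ T → f q = f p + a i)
    (B : ℕ) (xi : ℕ) (hxi : xi < B)
    (r : ℕ∞) (hr : r = ⊤ ∨ ∃ v : ℕ, v < B ∧ r = (v : ℕ∞)) :
    LexLt (rankVASS (Unfold T qin i B)) (rankVASS T) :=
  stmt17_general T qin hfin hsc i hnotfixed B
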